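/- Let L₁ and L₂ be complete lattices and let g : 𝒫(L₁) → 𝒫(L₂) be a map between their powersets that preserves arbitrary unions and for which there exists a map h : DI(L₁) → DI(L₂) with h(𝒞₁(X)) = 𝒞₂(g(X)) for all X ⊆ L₁. Then the map F(g) : DI(L₁) → DI(L₂), A ↦ 𝒞₂(g(A)), preserves arbitrary suprema of distributive ideals: for every family {A_i} in DI(L₁), 𝒞₂(g(𝒞₁(⋃_i A_i))) = 𝒞₂(⋃_i 𝒞₂(g(A_i))). -/
import Mathlib


/-- A subset `S` of a complete lattice is *distributive* if
`a ⊓ sSup S = ⨆ s ∈ S, a ⊓ s` for every `a`. -/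
def IsDistrib {L : Type*} [CompleteLattice L] (S : Set L) : Prop :=
  ∀ a : L, a ⊓ sSup S = ⨆ s ∈ S, a ⊓ s

/-- A *distributive ideal* is a lower set closed under suprema of its
distributive subsets. -/
def IsDistribIdeal {L : Type*} [CompleteLattice L] (I : Set L) : Prop :=
  IsLowerSet I ∧ ∀ S : Set L, S ⊆ I → IsDistrib S → sSup S ∈ I

/-- The lower set `↓A` generated by `A`. -/
def downSet {L : Type*} [CompleteLattice L] (A : Set L) : Set L :=
  {x | ∃ a ∈ A, x ≤ a}

/-- The closure `𝒞(A) = { sSup B | B ⊆ ↓A, B distributive }`. -/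
def distClosure {L : Type*} [CompleteLattice L] (A : Set L) : Set L :=
  {x | ∃ B : Set L, B ⊆ downSet A ∧ IsDistrib B ∧ x = sSup B}

lemma downSet_mono {L : Type*} [CompleteLattice L] {A B : Set L} (h : A ⊆ B) :
    downSet A ⊆ downSet B := by
  rintro x ⟨a, ha, hx⟩
  exact ⟨a, h ha, hx⟩

lemma distClosure_mono {L : Type*} [CompleteLattice L] {A B : Set L} (h : A ⊆ B) :
    distClosure A ⊆ distClosure B := by
  rintro x ⟨C, hC, hd, rfl⟩
  exact ⟨C, hC.trans (downSet_mono h), hd, rfl⟩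

lemma subset_distClosure {L : Type*} [CompleteLattice L] (A : Set L) :
    A ⊆ distClosure A := by
  intro x hx
  refine ⟨{x}, ?_, ?_, by simp⟩
  · rintro y hy
    exact ⟨x, hx, by simp_all⟩
  · intro a
    simp

lemma isLowerSet_distClosure {L : Type*} [CompleteLattice L] (A : Set L) :
    IsLowerSet (distClosure A) := by
  rintro x y hyx ⟨B, hB, hd, rfl⟩
  have hsup : sSup ((fun b => y ⊓ b) '' B) = y := by
    rw [sSup_image]
    have := (hd y).symm
    simp only [this]
    exact inf_eq_left.mpr hyx
  refine ⟨(fun b => y ⊓ b) '' B, ?_, ?_, hsup.symm⟩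
  · rintro z ⟨b, hb, rfl⟩
    obtain ⟨a, ha, hba⟩ := hB hb
    exact ⟨a, ha, le_trans inf_le_right hba⟩
  · intro a
    rw [hsup]
    have h1 : (⨆ s ∈ (fun b => y ⊓ b) '' B, a ⊓ s) = ⨆ b ∈ B, a ⊓ (y ⊓ b) := by
      rw [iSup_image]
    rw [h1]
    have h2 : (⨆ b ∈ B, a ⊓ (y ⊓ b)) = ⨆ b ∈ B, (a ⊓ y) ⊓ b := by
      congr 1; ext b; congr 1; ext hb; rw [inf_assoc]
    rw [h2, ← hd (a ⊓ y)]
    have : a ⊓ y ≤ sSup B := le_trans (le_trans inf_le_right hyx) le_rfl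
    rw [inf_eq_left.mpr this]

lemma downSet_subset_of_lower {L : Type*} [CompleteLattice L] {A : Set L}
    (h : IsLowerSet A) : downSet A ⊆ A := by
  rintro x ⟨a, ha, hx⟩
  exact h hx ha

lemma distClosure_idem {L : Type*} [CompleteLattice L] (A : Set L) :
    distClosure (distClosure A) = distClosure A := by
  apply Set.Subset.antisymm
  · rintro x ⟨B, hB, hd, rfl⟩
    have hB' : B ⊆ distClosure A :=
      hB.trans (downSet_subset_of_lower (isLowerSet_distClosure A))
    choose C hC1 hC2 hC3 using fun (b : B) => hB' b.2
    refine ⟨⋃ b : B, C b, ?_, ?_, ?_⟩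
    · intro z hz
      obtain ⟨b, hb⟩ := Set.mem_iUnion.mp hz
      exact hC1 b hb
    · intro a
      have hsup : sSup (⋃ b : B, C b) = sSup B := by
        rw [sSup_iUnion]
        conv_rhs => rw [sSup_eq_iSup']
        exact iSup_congr fun b => (hC3 b).symm
      rw [hsup, hd a, ← iSup_subtype'']
      have : (⨆ b : B, a ⊓ (b : L)) = ⨆ b : B, ⨆ c ∈ C b, a ⊓ c := by
        refine iSup_congr fun b => ?_
        rw [show ((b : L)) = sSup (C b) from hC3 b, hC2 b a]
      rw [this, iSup_iUnion]
    · rw [sSup_iUnion]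
      conv_lhs => rw [sSup_eq_iSup']
      exact iSup_congr fun b => hC3 b
  · exact subset_distClosure _

lemma distClosure_iUnion_distClosure {L : Type*} [CompleteLattice L]
    {ι : Type*} (X : ι → Set L) :
    distClosure (⋃ i, distClosure (X i)) = distClosure (⋃ i, X i) := by
  apply Set.Subset.antisymm
  · have h1 : (⋃ i, distClosure (X i)) ⊆ distClosure (⋃ i, X i) := by
      refine Set.iUnion_subset fun i => distClosure_mono ?_
      exact Set.subset_iUnion X i
    calc distClosure (⋃ i, distClosure (X i))
        ⊆ distClosure (distClosure (⋃ i, X i)) := distClosure_mono h1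
      _ = distClosure (⋃ i, X i) := distClosure_idem _
  · exact distClosure_mono (Set.iUnion_mono fun i => subset_distClosure _)

/-- If `g : 𝒫(L₁) → 𝒫(L₂)` preserves arbitrary unions and descends along the
closures (there is `h` with `h (𝒞₁ X) = 𝒞₂ (g X)` for all `X`), then
`A ↦ 𝒞₂(g A)` preserves arbitrary suprema of distributive ideals. -/
theorem F_preserves_DI_suprema {L₁ : Type*} {L₂ : Type*}
    [CompleteLattice L₁] [CompleteLattice L₂]
    (g : Set L₁ → Set L₂)
    (hg : ∀ 𝒳 : Set (Set L₁), g (⋃₀ 𝒳) = ⋃ X ∈ 𝒳, g X)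
    (hh : ∃ h : Set L₁ → Set L₂, ∀ X : Set L₁,
      h (distClosure X) = distClosure (g X))
    {ι : Type*} (A : ι → Set L₁) (hA : ∀ i, IsDistribIdeal (A i)) :
    distClosure (g (distClosure (⋃ i, A i))) =
      distClosure (⋃ i, distClosure (g (A i))) := by
  obtain ⟨h, hhEq⟩ := hh
  have key : distClosure (g (distClosure (⋃ i, A i))) = distClosure (g (⋃ i, A i)) := by
    rw [← hhEq (distClosure (⋃ i, A i)), distClosure_idem, hhEq]
  have hgU : g (⋃ i, A i) = ⋃ i, g (A i) := by
    have := hg (Set.range A)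
    rw [Set.sUnion_range] at this
    rw [this, Set.biUnion_range]
  rw [key, hgU, distClosure_iUnion_distClosure]
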